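/- If a natural number occurs twice as a value of the sequence a, then the two occurrences are at consecutive indices: for all natural numbers x < y, if a(x) = a(y) then y = x + 1. -/

import Mathlib

/-- The sequence A105774: `a n = n` for `n ≤ 1`, and
`a n = fib (j+1) - a (n - fib j)` where `j ≥ 2` is the unique index
with `fib j < n ≤ fib (j+1)` (realized as the greatest `j ≤ n` with `fib j < n`). -/
def a (n : ℕ) : ℕ :=
  if _h : n ≤ 1 then n
  else
    Nat.fib (Nat.findGreatest (fun j => Nat.fib j < n) n + 1) -
      a (n - Nat.fib (Nat.findGreatest (fun j => Nat.fib j < n) n))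
decreasing_by
  have h2 : 2 ≤ n := by omega
  have hj : 2 ≤ Nat.findGreatest (fun j => Nat.fib j < n) n :=
    Nat.le_findGreatest h2 (by show Nat.fib 2 < n; simp [Nat.fib_two]; omega)
  have hpos : 0 < Nat.fib (Nat.findGreatest (fun j => Nat.fib j < n) n) :=
    Nat.fib_pos.mpr (by omega)
  omega

/-!
Write `j = greatestFib (n - 1)`, so that `fib j < n ≤ fib (j + 1)` and the recursion reads
`a n = fib (j + 1) - a m` with remainder `m = n - fib j ∈ [1, fib (j - 1)]`. By strong induction
`0 < a m ≤ fib (j - 1)`, so `a` maps the block `(fib j, fib (j + 1)]` into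
`[fib j, fib (j + 1))`, i.e. `greatestFib (a n) = greatestFib (n - 1)`. Hence a repeated value
`a x = a y` with `2 ≤ x < y` comes from a single block, where cancelling `fib (j + 1)` leaves
`a (x - fib j) = a (y - fib j)` and induction applies; the only value that `x ≤ 1` shares with a
larger index is `a 1 = a 2 = 1`.
-/

open Nat

namespace Nat

lemma greatestFib_eq_iff {m j : ℕ} : greatestFib m = j ↔ fib j ≤ m ∧ m < fib (j + 1) := by
  rw [le_antisymm_iff, ← Nat.lt_succ_iff, greatestFib_lt, le_greatestFib, and_comm]

variable {n k : ℕ}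

lemma two_le_greatestFib_sub_one (hn : 2 ≤ n) : 2 ≤ greatestFib (n - 1) :=
  le_greatestFib.2 (by rw [fib_two]; omega)

lemma fib_greatestFib_sub_one_lt (hn : 0 < n) : fib (greatestFib (n - 1)) < n := by
  have := fib_greatestFib_le (n - 1); omega

lemma le_fib_greatestFib_sub_one_add_one : n ≤ fib (greatestFib (n - 1) + 1) := by
  have := lt_fib_greatestFib_add_one (n - 1); omega

lemma sub_fib_greatestFib_sub_one_pos (hn : 0 < n) : 0 < n - fib (greatestFib (n - 1)) := by
  have := fib_greatestFib_sub_one_lt hn; omega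

lemma sub_fib_greatestFib_sub_one_le (hn : 2 ≤ n) :
    n - fib (greatestFib (n - 1)) ≤ fib (greatestFib (n - 1) - 1) := by
  have h := @le_fib_greatestFib_sub_one_add_one n
  rw [fib_add_one (by have := two_le_greatestFib_sub_one hn; omega)] at h
  omega

end Nat

section
variable {n k : ℕ}

@[simp] lemma a_zero : a 0 = 0 := by simp [a]

@[simp] lemma a_one : a 1 = 1 := by simp [a]

lemma a_eq_fib_sub (hn : 2 ≤ n) :
    a n = fib (greatestFib (n - 1) + 1) - a (n - fib (greatestFib (n - 1))) := by
  have h : findGreatest (fun j => fib j < n) n = greatestFib (n - 1) := by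
    simp only [greatestFib, Nat.sub_add_cancel (by omega : 1 ≤ n),
      Nat.le_sub_one_iff_lt (by omega : 0 < n)]
  rw [a, dif_neg (by omega), h]

lemma a_two : a 2 = 1 := by
  have : greatestFib 1 = 2 := by decide
  simp [a_eq_fib_sub le_rfl, this, fib_add_two]

lemma a_pos_and_le_fib (hn : 0 < n) (hk : n ≤ fib k) : 0 < a n ∧ a n ≤ fib k := by
  induction n using Nat.strong_induction_on generalizing k with
  | _ n ih =>
  obtain rfl | hn2 : n = 1 ∨ 2 ≤ n := by omega
  · simpa using hk
  have hj2 := two_le_greatestFib_sub_one hn2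
  have hjk : greatestFib (n - 1) + 1 ≤ k := greatestFib_lt.2 (by omega)
  have hrem := ih _ (Nat.sub_lt (by omega) (fib_pos.2 (by omega)))
    (sub_fib_greatestFib_sub_one_pos hn) (sub_fib_greatestFib_sub_one_le hn2)
  rw [a_eq_fib_sub hn2]
  set j := greatestFib (n - 1)
  have hfib : fib (j + 1) = fib (j - 1) + fib j := fib_add_one (by omega)
  have hfj : 0 < fib j := fib_pos.2 (by omega)
  have := fib_mono hjk
  omega

lemma a_eq_zero_iff : a n = 0 ↔ n = 0 := by
  refine ⟨fun h => ?_, fun h => h ▸ a_zero⟩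
  by_contra hn
  have hk : n ≤ fib (n + 5) := (by omega : n ≤ n + 5).trans (le_fib_self (by omega))
  have := a_pos_and_le_fib (Nat.pos_of_ne_zero hn) hk
  omega

lemma a_le_fib (hk : n ≤ fib k) : a n ≤ fib k := by
  rcases Nat.eq_zero_or_pos n with rfl | hn
  · simp
  · exact (a_pos_and_le_fib hn hk).2

lemma greatestFib_a (hn : 2 ≤ n) : greatestFib (a n) = greatestFib (n - 1) := by
  have hj2 := two_le_greatestFib_sub_one hn
  have hrem := a_pos_and_le_fib (sub_fib_greatestFib_sub_one_pos (by omega : 0 < n))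
    (sub_fib_greatestFib_sub_one_le hn)
  rw [a_eq_fib_sub hn, greatestFib_eq_iff]
  set j := greatestFib (n - 1)
  have hfib : fib (j + 1) = fib (j - 1) + fib j := fib_add_one (by omega)
  omega

lemma a_eq_one_iff : a n = 1 ↔ n = 1 ∨ n = 2 := by
  refine ⟨fun h => ?_, by rintro (rfl | rfl) <;> simp [a_two]⟩
  obtain rfl | rfl | rfl | hn : n = 0 ∨ n = 1 ∨ n = 2 ∨ 3 ≤ n := by omega
  · simp at h
  · simp
  · simp
  · have hfib3 : fib 3 = 2 := rfl
    have h3 : 3 ≤ greatestFib (a n) := by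
      rw [greatestFib_a (by omega), le_greatestFib]
      omega
    rw [le_greatestFib] at h3
    omega

end

/-- If a natural number occurs twice as a value of `a`, the two occurrences are
at consecutive indices. -/
theorem a105774_twice_consecutive :
    ∀ x y : ℕ, x < y → a x = a y → y = x + 1 := by
  intro x y
  induction y using Nat.strong_induction_on generalizing x with
  | _ y ih =>
  intro hxy h
  obtain rfl | rfl | hx : x = 0 ∨ x = 1 ∨ 2 ≤ x := by omega
  · rw [a_zero, eq_comm, a_eq_zero_iff] at h
    omega
  · rw [a_one, eq_comm, a_eq_one_iff] at h
    omega
  have hy : 2 ≤ y := by omega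
  have hj : greatestFib (y - 1) = greatestFib (x - 1) := by
    rw [← greatestFib_a hy, ← h, greatestFib_a hx]
  have hxj := fib_greatestFib_sub_one_lt (by omega : 0 < x)
  have hyj := hj ▸ le_fib_greatestFib_sub_one_add_one (n := y)
  have hj2 := two_le_greatestFib_sub_one hx
  rw [a_eq_fib_sub hx, a_eq_fib_sub hy, hj] at h
  set j := greatestFib (x - 1)
  have hfj : 0 < fib j := fib_pos.2 (by omega)
  have hrem : a (x - fib j) = a (y - fib j) := by
    have := a_le_fib (show x - fib j ≤ fib (j + 1) by omega)
    have := a_le_fib (show y - fib j ≤ fib (j + 1) by omega)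
    omega
  have := ih (y - fib j) (by omega) (x - fib j) (by omega) hrem
  omega
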